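/- The quotient algebra B(Z_2) is 32-dimensional over F_2. More precisely, a basis is given by the 4 idempotents i_0, i_1, i_2, i_3 together with the 28 elements ρ_{[i,j]} = ρ_i ρ_{i+1} ··· ρ_j for 1 ≤ i ≤ j ≤ 7. -/

import Mathlib

open FreeAlgebra

/-- Generators of the path algebra `B(Z_2)`: four vertex idempotents and seven arrows. -/
inductive Gen2 : Type
  | e : Fin 4 → Gen2
  | r : Fin 7 → Gen2

/-- Sources of the arrows ρ₁,…,ρ₇. -/
def src2 : Fin 7 → Fin 4 := ![0, 1, 0, 1, 2, 3, 2]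

/-- Targets of the arrows ρ₁,…,ρ₇. -/
def tgt2 : Fin 7 → Fin 4 := ![1, 0, 1, 2, 3, 2, 3]

/-- Relations presenting `B(Z_2)` as a quotient of the free algebra: the path-algebra
relations for the quiver together with ρ₁ρ₄ = ρ₄ρ₇ = ρ₂ρ₁ = ρ₃ρ₂ = ρ₆ρ₅ = ρ₇ρ₆ = 0. -/
inductive Rel2 : FreeAlgebra (ZMod 2) Gen2 → FreeAlgebra (ZMod 2) Gen2 → Prop
  | idem (k : Fin 4) :
      Rel2 (ι (ZMod 2) (Gen2.e k) * ι (ZMod 2) (Gen2.e k)) (ι (ZMod 2) (Gen2.e k))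
  | orth (k l : Fin 4) (h : k ≠ l) : Rel2 (ι (ZMod 2) (Gen2.e k) * ι (ZMod 2) (Gen2.e l)) 0
  | sum : Rel2 (∑ k : Fin 4, ι (ZMod 2) (Gen2.e k)) 1
  | source (m : Fin 7) :
      Rel2 (ι (ZMod 2) (Gen2.e (src2 m)) * ι (ZMod 2) (Gen2.r m)) (ι (ZMod 2) (Gen2.r m))
  | target (m : Fin 7) :
      Rel2 (ι (ZMod 2) (Gen2.r m) * ι (ZMod 2) (Gen2.e (tgt2 m))) (ι (ZMod 2) (Gen2.r m))
  | rel14 : Rel2 (ι (ZMod 2) (Gen2.r 0) * ι (ZMod 2) (Gen2.r 3)) 0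
  | rel47 : Rel2 (ι (ZMod 2) (Gen2.r 3) * ι (ZMod 2) (Gen2.r 6)) 0
  | rel21 : Rel2 (ι (ZMod 2) (Gen2.r 1) * ι (ZMod 2) (Gen2.r 0)) 0
  | rel32 : Rel2 (ι (ZMod 2) (Gen2.r 2) * ι (ZMod 2) (Gen2.r 1)) 0
  | rel65 : Rel2 (ι (ZMod 2) (Gen2.r 5) * ι (ZMod 2) (Gen2.r 4)) 0
  | rel76 : Rel2 (ι (ZMod 2) (Gen2.r 6) * ι (ZMod 2) (Gen2.r 5)) 0

/-- The genus-2 bordered algebra `B(Z_2)`. -/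
abbrev B2 : Type := RingQuot Rel2

/-- The idempotents i₀, i₁, i₂, i₃ in `B(Z_2)`. -/
noncomputable def idem2 (k : Fin 4) : B2 :=
  RingQuot.mkAlgHom (ZMod 2) Rel2 (ι (ZMod 2) (Gen2.e k))

/-- The arrows ρ₁,…,ρ₇ in `B(Z_2)` (indexed by `Fin 7`). -/
noncomputable def arr2 (m : Fin 7) : B2 :=
  RingQuot.mkAlgHom (ZMod 2) Rel2 (ι (ZMod 2) (Gen2.r m))

/-- The arrow ρ_k in `B(Z_2)`, using 1-based indexing; `0` for out-of-range indices. -/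
noncomputable def ρ2 (k : ℕ) : B2 :=
  if h : 1 ≤ k ∧ k ≤ 7 then arr2 ⟨k - 1, by omega⟩ else 0

/-- The chord ρ_{[i,j]} = ρ_i ρ_{i+1} ⋯ ρ_j in `B(Z_2)` (1-based indices). -/
noncomputable def chord2 (i j : ℕ) : B2 :=
  ((List.range' i (j + 1 - i)).map ρ2).prod


/-- Index type for the chords rho_[i,j], 1 <= i <= j <= 7. -/
def ChordIdx2 : Type := {p : ℕ × ℕ // 1 ≤ p.1 ∧ p.1 ≤ p.2 ∧ p.2 ≤ 7}

/-!
In `B(Z_2)` a product `ρ_m ρ_n` of two arrows vanishes unless `n = m + 1`: either the arrows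
are not composable, or the product is one of the six relations. Hence the idempotents and the
chords multiply among themselves like intervals: `i_k ρ_{[i,j]}` and `ρ_{[i,j]} i_k` are
`ρ_{[i,j]}` or `0`, and `ρ_{[i,j]} ρ_{[k,l]}` is `ρ_{[i,l]}` if `k = j + 1` and `0` otherwise.
So their span is a subalgebra containing the generators, i.e. all of `B(Z_2)`.

For independence, this partial multiplication on the 32 symbols is associative, so its left
regular representation satisfies the defining relations and is a representation of `B(Z_2)`.
Applying the image of a basis element `b` to the vector `∑ k, e_{i_k}` (the image of `1`)
returns `e_b`.
-/

open Matrix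

section PartialMul

variable (R : Type*) {T ι : Type*} [CommSemiring R] [DecidableEq T]

/-- `mul a s = none` encodes the product `0`. -/
def regularMatrix (mul : T → T → Option T) (a : T) : Matrix T T R :=
  Matrix.of fun t s => if mul a s = some t then 1 else 0

variable {R} {mul : T → T → Option T}

theorem elim_regularMatrix_apply (o : Option T) (t s : T) :
    o.elim 0 (regularMatrix R mul) t s = if o.bind (mul · s) = some t then 1 else 0 := by
  cases o <;> simp [regularMatrix]

variable [Fintype ι] [DecidableEq ι]

theorem sum_regularMatrix_eq_one (e : ι → T) (src : T → ι)
    (he : ∀ k s, mul (e k) s = if k = src s then some s else none) :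
    ∑ k, regularMatrix R mul (e k) = 1 := by
  ext t s
  simp [Matrix.sum_apply, regularMatrix, he, Matrix.one_apply, ite_and, eq_comm]

variable [Fintype T]

theorem regularMatrix_mul_regularMatrix
    (hassoc : ∀ a b c, (mul a b).bind (mul · c) = (mul b c).bind (mul a)) (a b : T) :
    regularMatrix R mul a * regularMatrix R mul b = (mul a b).elim 0 (regularMatrix R mul) := by
  ext t s
  rw [elim_regularMatrix_apply, hassoc, Matrix.mul_apply]
  cases h : mul b s <;> simp [regularMatrix, h]

theorem regularMatrix_mulVec_sum_single (e : ι → T) (tgt : T → ι)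
    (he : ∀ a k, mul a (e k) = if k = tgt a then some a else none) (a : T) :
    regularMatrix R mul a *ᵥ ∑ k, Pi.single (e k) 1 = Pi.single a 1 := by
  ext t
  simp [Matrix.mulVec_sum, regularMatrix, he, Pi.single_apply, ite_and, eq_comm]

end PartialMul

theorem Submodule.span_eq_top_of_mul_mem {R A : Type*} [CommSemiring R] [Semiring A] [Algebra R A]
    {s : Set A} (hone : 1 ∈ span R s) (hmul : ∀ x ∈ s, ∀ y ∈ s, x * y ∈ span R s)
    (hadjoin : Algebra.adjoin R s = ⊤) : span R s = ⊤ := by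
  have hclosed : span R s * span R s ≤ span R s := by
    rw [span_mul_span]
    exact span_le.2 fun _ ⟨x, hx, y, hy, hxy⟩ => hxy ▸ hmul x hx y hy
  let S := (span R s).toSubalgebra hone fun x y hx hy => hclosed (mul_mem_mul hx hy)
  have hS : Algebra.adjoin R s ≤ S := Algebra.adjoin_le subset_span
  rw [hadjoin] at hS
  exact eq_top_iff.2 fun x _ => hS Algebra.mem_top

theorem RingQuot.adjoin_range_mkAlgHom_ι (R : Type*) {X : Type*} [CommSemiring R]
    (r : FreeAlgebra R X → FreeAlgebra R X → Prop) :
    Algebra.adjoin R (Set.range (RingQuot.mkAlgHom R r ∘ FreeAlgebra.ι R)) = ⊤ := by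
  rw [Set.range_comp, Algebra.adjoin_image, FreeAlgebra.adjoin_range_ι, Algebra.map_top,
    AlgHom.range_eq_top]
  exact RingQuot.mkAlgHom_surjective R r

instance : DecidableEq ChordIdx2 := by unfold ChordIdx2; infer_instance

instance : Fintype ChordIdx2 :=
  Fintype.subtype ((Finset.Icc 1 7 ×ˢ Finset.Icc 1 7).filter fun p => p.1 ≤ p.2) fun _ => by
    simp only [Finset.mem_filter, Finset.mem_product, Finset.mem_Icc]
    omega

namespace ChordIdx2

theorem card_eq : Fintype.card ChordIdx2 = 28 := rfl

def lo (p : ChordIdx2) : ℕ := p.1.1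

def hi (p : ChordIdx2) : ℕ := p.1.2

theorem bounds (p : ChordIdx2) : 1 ≤ p.lo ∧ p.lo ≤ p.hi ∧ p.hi ≤ 7 := p.2

@[ext] theorem ext {p q : ChordIdx2} (h₁ : p.lo = q.lo) (h₂ : p.hi = q.hi) : p = q :=
  Subtype.ext (Prod.ext h₁ h₂)

def mk (i j : ℕ) (h : 1 ≤ i ∧ i ≤ j ∧ j ≤ 7) : ChordIdx2 := ⟨(i, j), h⟩

@[simp] theorem lo_mk (i j : ℕ) (h : 1 ≤ i ∧ i ≤ j ∧ j ≤ 7) : (mk i j h).lo = i := rfl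

@[simp] theorem hi_mk (i j : ℕ) (h : 1 ≤ i ∧ i ≤ j ∧ j ≤ 7) : (mk i j h).hi = j := rfl

def src (p : ChordIdx2) : Fin 4 := src2 ⟨p.lo - 1, by have := p.bounds; omega⟩

def tgt (p : ChordIdx2) : Fin 4 := tgt2 ⟨p.hi - 1, by have := p.bounds; omega⟩

def append (p q : ChordIdx2) (h : q.lo = p.hi + 1) : ChordIdx2 :=
  mk p.lo q.hi (by have := p.bounds; have := q.bounds; omega)

@[simp] theorem lo_append (p q : ChordIdx2) (h : q.lo = p.hi + 1) :
    (p.append q h).lo = p.lo := rfl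

@[simp] theorem hi_append (p q : ChordIdx2) (h : q.lo = p.hi + 1) :
    (p.append q h).hi = q.hi := rfl

@[simp] theorem src_append (p q : ChordIdx2) (h : q.lo = p.hi + 1) :
    (p.append q h).src = p.src := rfl

@[simp] theorem tgt_append (p q : ChordIdx2) (h : q.lo = p.hi + 1) :
    (p.append q h).tgt = q.tgt := rfl

theorem src_eq_tgt {p q : ChordIdx2} (h : q.lo = p.hi + 1) : q.src = p.tgt := by
  have := p.bounds
  have := q.bounds
  unfold src tgt
  simp only [h, Nat.add_sub_cancel]
  have consecutive : ∀ m : Fin 6, src2 m.succ = tgt2 m.castSucc := by decide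
  convert consecutive ⟨p.hi - 1, by omega⟩ using 2
  · ext
    simp only [Fin.val_succ]
    omega
  · rfl

def arrow (m : Fin 7) : ChordIdx2 := mk (m + 1) (m + 1) (by omega)

end ChordIdx2

/-- `inl k` indexes the idempotent `i_k` and `inr p` the chord `ρ_[p.lo, p.hi]`. -/
abbrev BasisIdx2 : Type := Fin 4 ⊕ ChordIdx2

namespace BasisIdx2

def src : BasisIdx2 → Fin 4
  | .inl k => k
  | .inr p => p.src

def tgt : BasisIdx2 → Fin 4
  | .inl k => k
  | .inr p => p.tgt

def mul : BasisIdx2 → BasisIdx2 → Option BasisIdx2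
  | .inl k, .inl l => if k = l then some (.inl l) else none
  | .inl k, .inr p => if k = p.src then some (.inr p) else none
  | .inr p, .inl k => if k = p.tgt then some (.inr p) else none
  | .inr p, .inr q => if h : q.lo = p.hi + 1 then some (.inr (p.append q h)) else none

theorem mul_inl_left (k : Fin 4) (b : BasisIdx2) :
    mul (.inl k) b = if k = b.src then some b else none := by
  cases b <;> rfl

theorem mul_inl_right (a : BasisIdx2) (k : Fin 4) :
    mul a (.inl k) = if k = a.tgt then some a else none := by
  rcases a with l | p
  · simp only [mul, tgt]
    split_ifs <;> simp_all [eq_comm]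
  · rfl

theorem src_eq_tgt_of_mul_eq_some {a b d : BasisIdx2} (h : mul a b = some d) :
    a.tgt = b.src ∧ d.src = a.src ∧ d.tgt = b.tgt := by
  rcases a with k | p <;> rcases b with l | q <;> simp only [mul] at h <;>
    split_ifs at h with hab <;> cases h
  all_goals simp [src, tgt, hab]
  exact (ChordIdx2.src_eq_tgt hab).symm

theorem mul_assoc (a b c : BasisIdx2) :
    (mul a b).bind (mul · c) = (mul b c).bind (mul a) := by
  rcases a with k | p
  · rw [mul_inl_left]
    cases h : mul b c with
    | none => split_ifs <;> simp [h]
    | some d => split_ifs <;> simp_all [mul_inl_left, (src_eq_tgt_of_mul_eq_some h).2.1]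
  rcases c with m | r
  · simp only [mul_inl_right]
    cases h : mul (.inr p) b with
    | none => split_ifs <;> simp [h]
    | some d => split_ifs <;> simp_all [(src_eq_tgt_of_mul_eq_some h).2.2]
  rcases b with l | q
  · simp only [mul_inl_right, mul_inl_left]
    cases h : mul (.inr p) (.inr r) with
    | none => split_ifs <;> simp [h]
    | some d => split_ifs <;> simp_all [(src_eq_tgt_of_mul_eq_some h).1]
  simp only [mul]
  split_ifs <;> simp_all [mul, ChordIdx2.ext_iff]

end BasisIdx2

theorem idem2_mul_idem2 (k l : Fin 4) : idem2 k * idem2 l = if k = l then idem2 l else 0 := by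
  split_ifs with h
  · subst h
    rw [idem2, ← map_mul]
    exact RingQuot.mkAlgHom_rel _ (Rel2.idem k)
  · rw [idem2, idem2, ← map_mul, RingQuot.mkAlgHom_rel _ (Rel2.orth k l h), map_zero]

theorem sum_idem2 : ∑ k, idem2 k = 1 := by
  simp only [idem2]
  rw [← map_sum, RingQuot.mkAlgHom_rel _ Rel2.sum, map_one]

theorem idem2_src_mul_arr2 (m : Fin 7) : idem2 (src2 m) * arr2 m = arr2 m := by
  rw [idem2, arr2, ← map_mul]
  exact RingQuot.mkAlgHom_rel _ (Rel2.source m)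

theorem arr2_mul_idem2_tgt (m : Fin 7) : arr2 m * idem2 (tgt2 m) = arr2 m := by
  rw [idem2, arr2, ← map_mul]
  exact RingQuot.mkAlgHom_rel _ (Rel2.target m)

theorem idem2_mul_arr2 (k : Fin 4) (m : Fin 7) :
    idem2 k * arr2 m = if k = src2 m then arr2 m else 0 := by
  rw [← idem2_src_mul_arr2, ← mul_assoc, idem2_mul_idem2]
  split_ifs <;> simp

theorem arr2_mul_idem2 (m : Fin 7) (k : Fin 4) :
    arr2 m * idem2 k = if k = tgt2 m then arr2 m else 0 := by
  rw [← arr2_mul_idem2_tgt, mul_assoc, idem2_mul_idem2]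
  split_ifs <;> simp_all

theorem arr2_mul_arr2_eq_zero {m n : Fin 7} (h : (n : ℕ) ≠ m + 1) : arr2 m * arr2 n = 0 := by
  by_cases hc : tgt2 m = src2 n
  · have rel : Rel2 (ι (ZMod 2) (Gen2.r m) * ι (ZMod 2) (Gen2.r n)) 0 := by
      fin_cases m <;> fin_cases n <;>
        first | exact absurd hc (by decide) | exact absurd h (by decide) | constructor
    rw [arr2, arr2, ← map_mul, RingQuot.mkAlgHom_rel _ rel, map_zero]
  · rw [← arr2_mul_idem2_tgt, mul_assoc, idem2_mul_arr2, if_neg hc, mul_zero]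

theorem ρ2_eq_arr2 {i : ℕ} (h1 : 1 ≤ i) (h7 : i ≤ 7) : ρ2 i = arr2 ⟨i - 1, by omega⟩ :=
  dif_pos ⟨h1, h7⟩

theorem chord2_self (i : ℕ) : chord2 i i = ρ2 i := by
  simp [chord2]

theorem chord2_mul_chord2 {i j k : ℕ} (hij : i ≤ j + 1) (hjk : j ≤ k) :
    chord2 i j * chord2 (j + 1) k = chord2 i k := by
  have hsplit : k + 1 - i = (j + 1 - i) + (k + 1 - (j + 1)) := by omega
  rw [chord2, chord2, chord2, ← List.prod_append, ← List.map_append, hsplit,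
    ← List.range'_append_1, show i + (j + 1 - i) = j + 1 by omega]

theorem chord2_eq_ρ2_mul {i j : ℕ} (h : i ≤ j) : chord2 i j = ρ2 i * chord2 (i + 1) j := by
  rw [← chord2_mul_chord2 (Nat.le_succ i) h]
  simp [chord2]

theorem chord2_succ {i j : ℕ} (h : i ≤ j + 1) :
    chord2 i (j + 1) = chord2 i j * ρ2 (j + 1) := by
  rw [← chord2_mul_chord2 h (Nat.le_succ j)]
  simp [chord2]

theorem idem2_mul_chord2 (k : Fin 4) (p : ChordIdx2) :
    idem2 k * chord2 p.lo p.hi = if k = p.src then chord2 p.lo p.hi else 0 := by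
  have hp := p.bounds
  rw [chord2_eq_ρ2_mul hp.2.1, ρ2_eq_arr2 hp.1 (by omega), ← mul_assoc, idem2_mul_arr2]
  split_ifs <;> simp_all [ChordIdx2.src]

theorem chord2_mul_idem2 (p : ChordIdx2) (k : Fin 4) :
    chord2 p.lo p.hi * idem2 k = if k = p.tgt then chord2 p.lo p.hi else 0 := by
  have hp := p.bounds
  rw [show p.hi = p.hi - 1 + 1 by omega, chord2_succ (by omega),
    ρ2_eq_arr2 (by omega) (by omega), mul_assoc, arr2_mul_idem2]
  split_ifs <;> simp_all [ChordIdx2.tgt]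

theorem chord2_mul_chord2_of_ne {p q : ChordIdx2} (h : q.lo ≠ p.hi + 1) :
    chord2 p.lo p.hi * chord2 q.lo q.hi = 0 := by
  have hp := p.bounds
  have hq := q.bounds
  rw [show p.hi = p.hi - 1 + 1 by omega, chord2_succ (by omega), chord2_eq_ρ2_mul hq.2.1,
    mul_assoc, ← mul_assoc (ρ2 _), ρ2_eq_arr2 (by omega) (by omega),
    ρ2_eq_arr2 hq.1 (by omega), arr2_mul_arr2_eq_zero (by simp only; omega), zero_mul, mul_zero]

noncomputable def basis2 : BasisIdx2 → B2 := Sum.elim idem2 fun p => chord2 p.lo p.hi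

@[simp] theorem basis2_inl (k : Fin 4) : basis2 (.inl k) = idem2 k := rfl

@[simp] theorem basis2_inr (p : ChordIdx2) : basis2 (.inr p) = chord2 p.lo p.hi := rfl

theorem basis2_mul_basis2 (a b : BasisIdx2) :
    basis2 a * basis2 b = (a.mul b).elim 0 basis2 := by
  rcases a with k | p <;> rcases b with l | q <;>
    simp only [basis2_inl, basis2_inr, BasisIdx2.mul]
  · rw [idem2_mul_idem2]
    split_ifs <;> rfl
  · rw [idem2_mul_chord2]
    split_ifs <;> rfl
  · rw [chord2_mul_idem2]
    split_ifs <;> rfl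
  · split_ifs with h
    · have := p.bounds
      have := q.bounds
      rw [h]
      exact chord2_mul_chord2 (by omega) (by omega)
    · exact chord2_mul_chord2_of_ne h

theorem basis2_arrow (m : Fin 7) : basis2 (.inr (ChordIdx2.arrow m)) = arr2 m := by
  simp [ChordIdx2.arrow, chord2_self, ρ2_eq_arr2]

theorem span_basis2_eq_top : Submodule.span (ZMod 2) (Set.range basis2) = ⊤ := by
  refine Submodule.span_eq_top_of_mul_mem ?_ ?_ ?_
  · rw [← sum_idem2]
    exact Submodule.sum_mem _ fun k _ => Submodule.subset_span ⟨.inl k, rfl⟩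
  · rintro _ ⟨a, rfl⟩ _ ⟨b, rfl⟩
    rw [basis2_mul_basis2]
    cases a.mul b with
    | none => exact Submodule.zero_mem _
    | some c => exact Submodule.subset_span ⟨c, rfl⟩
  · refine top_unique ((RingQuot.adjoin_range_mkAlgHom_ι (ZMod 2) Rel2).ge.trans
      (Algebra.adjoin_mono ?_))
    rintro _ ⟨g | m, rfl⟩
    · exact ⟨.inl g, rfl⟩
    · exact ⟨.inr (ChordIdx2.arrow m), basis2_arrow m⟩

local notation "L₂" => regularMatrix (ZMod 2) BasisIdx2.mul

theorem BasisIdx2.regularMatrix_mul_regularMatrix (a b : BasisIdx2) :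
    L₂ a * L₂ b = (a.mul b).elim 0 L₂ :=
  _root_.regularMatrix_mul_regularMatrix BasisIdx2.mul_assoc a b

def genMatrix2 : Gen2 → Matrix BasisIdx2 BasisIdx2 (ZMod 2)
  | .e k => L₂ (.inl k)
  | .r m => L₂ (.inr (ChordIdx2.arrow m))

theorem lift_genMatrix2_rel ⦃x y : FreeAlgebra (ZMod 2) Gen2⦄ (h : Rel2 x y) :
    FreeAlgebra.lift (ZMod 2) genMatrix2 x = FreeAlgebra.lift (ZMod 2) genMatrix2 y := by
  cases h <;> simp only [map_mul, map_sum, map_zero, map_one, FreeAlgebra.lift_ι_apply,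
    genMatrix2, BasisIdx2.regularMatrix_mul_regularMatrix]
  case sum => exact sum_regularMatrix_eq_one _ BasisIdx2.src BasisIdx2.mul_inl_left
  all_goals simp [BasisIdx2.mul, ChordIdx2.arrow, ChordIdx2.src, ChordIdx2.tgt, *]

noncomputable def regRep2 : B2 →ₐ[ZMod 2] Matrix BasisIdx2 BasisIdx2 (ZMod 2) :=
  RingQuot.liftAlgHom (ZMod 2) ⟨FreeAlgebra.lift (ZMod 2) genMatrix2, lift_genMatrix2_rel⟩

theorem regRep2_ρ2 {i : ℕ} (h1 : 1 ≤ i) (h7 : i ≤ 7) :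
    regRep2 (ρ2 i) = L₂ (.inr (.mk i i ⟨h1, le_rfl, h7⟩)) := by
  rw [ρ2_eq_arr2 h1 h7, arr2, regRep2, RingQuot.liftAlgHom_mkAlgHom_apply]
  simp only [FreeAlgebra.lift_ι_apply, genMatrix2]
  congr 2
  ext <;> simp only [ChordIdx2.arrow, ChordIdx2.lo_mk, ChordIdx2.hi_mk] <;> omega

theorem regRep2_chord2 {i j : ℕ} (h1 : 1 ≤ i) (hij : i ≤ j) (hj : j ≤ 7) :
    regRep2 (chord2 i j) = L₂ (.inr (.mk i j ⟨h1, hij, hj⟩)) := by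
  induction j, hij using Nat.le_induction with
  | base => rw [chord2_self, regRep2_ρ2 h1 hj]
  | succ j hij ih =>
    rw [chord2_succ (by omega), map_mul, ih (by omega), regRep2_ρ2 (by omega) hj,
      BasisIdx2.regularMatrix_mul_regularMatrix]
    simp only [BasisIdx2.mul, ChordIdx2.lo_mk, ChordIdx2.hi_mk, ↓reduceDIte, Option.elim]
    rfl

theorem regRep2_basis2 (a : BasisIdx2) : regRep2 (basis2 a) = L₂ a := by
  rcases a with k | p
  · rw [basis2_inl, idem2, regRep2, RingQuot.liftAlgHom_mkAlgHom_apply]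
    simp only [FreeAlgebra.lift_ι_apply, genMatrix2]
  · have hp := p.bounds
    rw [basis2_inr, regRep2_chord2 hp.1 hp.2.1 hp.2.2]
    rfl

theorem linearIndependent_basis2 : LinearIndependent (ZMod 2) basis2 := by
  let one : BasisIdx2 → ZMod 2 := ∑ k, Pi.single (.inl k) 1
  let f := LinearMap.applyₗ one ∘ₗ Matrix.toLin'.toLinearMap ∘ₗ regRep2.toLinearMap
  have hf : ⇑f ∘ basis2 = Pi.basisFun (ZMod 2) BasisIdx2 := by
    funext a
    show regRep2 (basis2 a) *ᵥ one = _
    rw [regRep2_basis2, regularMatrix_mulVec_sum_single _ BasisIdx2.tgt BasisIdx2.mul_inl_right,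
      Pi.basisFun_apply]
  exact .of_comp f (hf ▸ (Pi.basisFun (ZMod 2) BasisIdx2).linearIndependent)

/-- the 4 idempotents together with the 28 chords form a basis of B(Z_2),
which is therefore 32-dimensional over F_2. -/
theorem stmt_0 :
    LinearIndependent (ZMod 2)
      (Sum.elim idem2 (fun p : ChordIdx2 => chord2 p.1.1 p.1.2)) ∧
    Submodule.span (ZMod 2)
      (Set.range (Sum.elim idem2 (fun p : ChordIdx2 => chord2 p.1.1 p.1.2))) = ⊤ ∧
    Module.finrank (ZMod 2) B2 = 32 := by
  refine ⟨linearIndependent_basis2, span_basis2_eq_top, ?_⟩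
  rw [Module.finrank_eq_card_basis (.mk linearIndependent_basis2 span_basis2_eq_top.ge),
    Fintype.card_sum, ChordIdx2.card_eq, Fintype.card_fin]
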